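/- For every p ∈ (1,∞) one has π_p^p > 2, where π_p := 2π(p−1)^{1/p}/(p·sin(π/p)); moreover lim_{p→1⁺} π_p^p = 2 and lim_{p→+∞} π_p^p = +∞. -/

import Mathlib

open Filter Topology

/-- `π_p := 2π (p-1)^{1/p} / (p sin(π/p))`. -/
noncomputable def piP (p : ℝ) : ℝ :=
  2 * Real.pi * (p - 1) ^ (1 / p) / (p * Real.sin (Real.pi / p))

/-!
Put `θ = π - π/p ∈ (0, π)`. Then `sin (π/p) = sin θ` and `π_p^p = 2^p (p-1)^(1-p) (θ / sin θ)^p`.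
Since `sin θ < min θ (π - θ)` and `θ / (π - θ) = p - 1`, we get `θ / sin θ > max 1 (p - 1)`, so
`π_p^p > 2^p (p-1)^(1-p) ≥ 2^p > 2` for `p ≤ 2` and `π_p^p > 2^p (p-1) ≥ 2` for `p ≥ 2`; the
latter bound also gives `π_p^p → ∞`. As `p → 1⁺`, `(p-1)^(1-p) = exp (negMulLog (p-1)) → 1` and
`θ / sin θ = (sinc θ)⁻¹ → 1`, so `π_p^p → 2`.
-/

open Real

lemma one_lt_div_sin {x : ℝ} (h0 : 0 < x) (hπ : x < π) : 1 < x / sin x :=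
  (one_lt_div (sin_pos_of_pos_of_lt_pi h0 hπ)).2 (sin_lt h0)

lemma div_pi_sub_lt_div_sin {x : ℝ} (h0 : 0 < x) (hπ : x < π) :
    x / (π - x) < x / sin x := by
  have hsin : sin x < π - x := by simpa only [sin_pi_sub] using sin_lt (sub_pos.2 hπ)
  exact div_lt_div_of_pos_left h0 (sin_pos_of_pos_of_lt_pi h0 hπ) hsin

lemma rpow_neg_self_eq_exp_negMulLog {x : ℝ} (hx : 0 < x) : x ^ (-x) = exp (negMulLog x) := by
  rw [rpow_def_of_pos hx, negMulLog]
  ring_nf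

lemma pi_sub_pi_div_mem_Ioo {p : ℝ} (hp : 1 < p) : π - π / p ∈ Set.Ioo 0 π :=
  ⟨sub_pos.2 (div_lt_self pi_pos hp), sub_lt_self _ (by positivity)⟩

lemma piP_eq {p : ℝ} (hp : 1 < p) :
    piP p = 2 * (p - 1) ^ (1 / p - 1) * ((π - π / p) / sin (π - π / p)) := by
  have hp1 : 0 < p - 1 := sub_pos.2 hp
  have hsin : 0 < sin (π / p) :=
    sin_pos_of_pos_of_lt_pi (by positivity) (div_lt_self pi_pos hp)
  rw [sin_pi_sub, rpow_sub_one hp1.ne', piP]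
  field_simp

lemma piP_rpow_eq {p : ℝ} (hp : 1 < p) :
    piP p ^ p = 2 ^ p * (p - 1) ^ (1 - p) * ((π - π / p) / sin (π - π / p)) ^ p := by
  have hp1 : 0 < p - 1 := sub_pos.2 hp
  obtain ⟨hθ, hθπ⟩ := pi_sub_pi_div_mem_Ioo hp
  have hsin := sin_pos_of_pos_of_lt_pi hθ hθπ
  rw [piP_eq hp, mul_rpow (by positivity) (by positivity),
    mul_rpow (by positivity) (by positivity), ← rpow_mul hp1.le]
  congr 3
  field_simp

lemma two_rpow_mul_rpow_lt_piP_rpow {p : ℝ} (hp : 1 < p) :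
    2 ^ p * (p - 1) ^ (1 - p) < piP p ^ p := by
  obtain ⟨hθ, hθπ⟩ := pi_sub_pi_div_mem_Ioo hp
  rw [piP_rpow_eq hp]
  exact lt_mul_of_one_lt_right (by positivity)
    (one_lt_rpow (one_lt_div_sin hθ hθπ) (by linarith))

lemma two_rpow_mul_lt_piP_rpow {p : ℝ} (hp : 1 < p) : 2 ^ p * (p - 1) < piP p ^ p := by
  have hp1 : 0 < p - 1 := sub_pos.2 hp
  obtain ⟨hθ, hθπ⟩ := pi_sub_pi_div_mem_Ioo hp
  have hratio : (π - π / p) / (π - (π - π / p)) = p - 1 := by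
    field_simp
    ring
  have hlt : p - 1 < (π - π / p) / sin (π - π / p) := hratio ▸ div_pi_sub_lt_div_sin hθ hθπ
  calc 2 ^ p * (p - 1) = 2 ^ p * (p - 1) ^ (1 - p) * (p - 1) ^ p := by
        rw [mul_assoc, ← rpow_add hp1]; norm_num
    _ < piP p ^ p := by
        rw [piP_rpow_eq hp]
        gcongr

lemma two_lt_piP_rpow {p : ℝ} (hp : 1 < p) : 2 < piP p ^ p := by
  have hp1 : 0 < p - 1 := sub_pos.2 hp
  rcases le_or_gt p 2 with hp2 | hp2
  · calc (2 : ℝ) < 2 ^ p := by simpa using rpow_lt_rpow_of_exponent_lt one_lt_two hp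
      _ ≤ 2 ^ p * (p - 1) ^ (1 - p) :=
        le_mul_of_one_le_right (by positivity)
          (one_le_rpow_of_pos_of_le_one_of_nonpos hp1 (by linarith) (by linarith))
      _ < piP p ^ p := two_rpow_mul_rpow_lt_piP_rpow hp
  · have h2 : (2 : ℝ) ≤ 2 ^ p := by simpa using rpow_le_rpow_of_exponent_le one_le_two hp.le
    calc (2 : ℝ) ≤ 2 ^ p * (p - 1) := by nlinarith
      _ < piP p ^ p := two_rpow_mul_lt_piP_rpow hp

lemma tendsto_piP_rpow_nhdsGT_one : Tendsto (fun p : ℝ => piP p ^ p) (𝓝[>] 1) (𝓝 2) := by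
  have hsinc : ContinuousAt (fun p : ℝ => (sinc (π - π / p))⁻¹) 1 :=
    (continuous_sinc.continuousAt.comp (by fun_prop (disch := norm_num))).inv₀ (by simp)
  have hexp : Continuous fun p : ℝ => exp (negMulLog (p - 1)) := by fun_prop
  have hlim : Tendsto (fun p : ℝ => 2 ^ p * exp (negMulLog (p - 1)) * (sinc (π - π / p))⁻¹ ^ p)
      (𝓝 1) (𝓝 2) := by
    simpa using ((continuousAt_const_rpow two_ne_zero).tendsto.mul (hexp.tendsto 1)).mul
      (hsinc.rpow continuousAt_id (Or.inr one_pos)).tendsto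
  refine (hlim.mono_left nhdsWithin_le_nhds).congr' ?_
  filter_upwards [self_mem_nhdsWithin] with p (hp : 1 < p)
  rw [piP_rpow_eq hp, sinc_of_ne_zero (pi_sub_pi_div_mem_Ioo hp).1.ne', inv_div,
    ← rpow_neg_self_eq_exp_negMulLog (sub_pos.2 hp), neg_sub]

lemma tendsto_piP_rpow_atTop : Tendsto (fun p : ℝ => piP p ^ p) atTop atTop := by
  refine tendsto_atTop_mono' atTop ?_ (tendsto_atTop_add_const_right atTop (-1) tendsto_id)
  filter_upwards [eventually_gt_atTop 1] with p hp
  have h2 : (1 : ℝ) ≤ 2 ^ p := one_le_rpow one_le_two (by linarith)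
  rw [id]
  nlinarith [two_rpow_mul_lt_piP_rpow hp]

/-- `π_p^p > 2` for every `p ∈ (1,∞)`, `π_p^p → 2` as `p → 1⁺`, and
`π_p^p → +∞` as `p → +∞`. -/
theorem stmt17 :
    (∀ p : ℝ, 1 < p → 2 < piP p ^ p) ∧
    Tendsto (fun p : ℝ => piP p ^ p) (𝓝[>] (1 : ℝ)) (𝓝 2) ∧
    Tendsto (fun p : ℝ => piP p ^ p) atTop atTop :=
  ⟨fun _ => two_lt_piP_rpow, tendsto_piP_rpow_nhdsGT_one, tendsto_piP_rpow_atTop⟩
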